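/- Let (X,τ) be a Hausdorff topological space and δ an extended semidistance on X which is lower semicontinuous with respect to the product topology. Let Σ be the set of continuous nondecreasing surjections σ : [0,1] → [0,1], Σ' ⊆ Σ the increasing homeomorphisms of [0,1], and Σ₂ ⊆ Σ the elements with |σ(r) − σ(s)| ≤ 2|r − s| for all r, s. For τ-continuous curves γ, γ' : [0,1] → X set δ_C(γ,γ') := sup_{t∈[0,1]} δ(γ(t),γ'(t)) and δ_A(γ,γ') := inf{ δ_C(γ∘σ₁, γ'∘σ₂) : σ₁, σ₂ ∈ Σ }. If γ₁, γ₂, γ₃ : [0,1] → X are τ-continuous and satisfy lim_{s→t} δ(γ_i(s),γ_i(t)) = 0 for every t ∈ [0,1] (i = 1,2,3), then: (i) δ_A(γ₁,γ₂) = inf{ δ_C(γ₁, γ₂∘σ) : σ ∈ Σ' }; (ii) the infimum defining δ_A(γ₁,γ₂) is attained by some pair σ₁, σ₂ ∈ Σ₂; (iii) δ_A(γ₁,γ₃) ≤ δ_A(γ₁,γ₂) + δ_A(γ₂,γ₃). -/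

import Mathlib

open Filter Set Topology unitInterval
open scoped ENNReal

/-- The set `Σ` of continuous nondecreasing surjections of `[0,1]` onto itself. -/
def SigmaAll : Set (I → I) :=
  {f | Continuous f ∧ Monotone f ∧ Function.Surjective f}

/-- The set `Σ'` of increasing homeomorphisms of `[0,1]`. -/
def SigmaHomeo : Set (I → I) :=
  {f | Continuous f ∧ StrictMono f ∧ Function.Surjective f}

/-- The set `Σ₂` of elements of `Σ` which are `2`-Lipschitz. -/
def SigmaTwo : Set (I → I) :=
  {f ∈ SigmaAll | ∀ r s : I, |(f r : ℝ) - (f s : ℝ)| ≤ 2 * |(r : ℝ) - (s : ℝ)|}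

/-- The uniform (sup) extended semidistance between two curves. -/
noncomputable def dC {X : Type*} (δ : X → X → ℝ≥0∞) (γ γ' : I → X) : ℝ≥0∞ :=
  ⨆ t : I, δ (γ t) (γ' t)

/-- The reparametrization-invariant extended semidistance between two curves. -/
noncomputable def dA {X : Type*} (δ : X → X → ℝ≥0∞) (γ γ' : I → X) : ℝ≥0∞ :=
  ⨅ f₁ ∈ SigmaAll, ⨅ f₂ ∈ SigmaAll, dC δ (γ ∘ f₁) (γ' ∘ f₂)

/-!
(i) Every `f ∈ Σ` is the uniform limit, as `c → 0⁺`, of the homeomorphisms `(1 - c) f + c id`.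
On the compact interval pointwise `δ`-continuity of a curve is uniform, so `δ_C` passes to this
limit; a pair of homeomorphisms reduces to a single one by composing with an inverse.
(iii) follows by composing near-optimal homeomorphisms for `(γ₁, γ₂)` and `(γ₂, γ₃)`.
(ii) Any pair `f₁, f₂ ∈ Σ` factors through its average `g = (f₁ + f₂) / 2` as `fᵢ = τᵢ ∘ g` with
`τᵢ ∈ Σ₂`, since `|fᵢ a - fᵢ b| ≤ 2 |g a - g b|`; precomposing with the surjection `g` does not
change `δ_C`. The set `Σ₂ × Σ₂` is compact for pointwise convergence and
`(τ₁, τ₂) ↦ δ_C(γ₁ ∘ τ₁, γ₂ ∘ τ₂)` is lower semicontinuous, so it attains its infimum there.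
-/

open scoped Uniformity

section

variable {X : Type*} {δ : X → X → ℝ≥0∞}

theorem map_zero_of_mem_sigmaAll {f : I → I} (hf : f ∈ SigmaAll) : f 0 = 0 := by
  obtain ⟨t, ht⟩ := hf.2.2 0
  exact le_antisymm ((hf.2.1 (show (0 : I) ≤ t from nonneg')).trans_eq ht) nonneg'

theorem map_one_of_mem_sigmaAll {f : I → I} (hf : f ∈ SigmaAll) : f 1 = 1 := by
  obtain ⟨t, ht⟩ := hf.2.2 1
  exact le_antisymm le_one' (ht.symm.trans_le (hf.2.1 (show t ≤ 1 from le_one')))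

theorem mem_sigmaAll_of_map_zero_of_map_one {f : I → I} (hc : Continuous f) (hm : Monotone f)
    (h0 : f 0 = 0) (h1 : f 1 = 1) : f ∈ SigmaAll := by
  refine ⟨hc, hm, fun y => intermediate_value_univ 0 1 hc ?_⟩
  rw [h0, h1]
  exact ⟨nonneg', le_one'⟩

theorem sigmaHomeo_subset_sigmaAll : SigmaHomeo ⊆ SigmaAll :=
  fun _ hf => ⟨hf.1, hf.2.1.monotone, hf.2.2⟩

theorem sigmaTwo_subset_sigmaAll : SigmaTwo ⊆ SigmaAll :=
  fun _ hf => hf.1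

theorem id_mem_sigmaHomeo : id ∈ SigmaHomeo :=
  ⟨continuous_id, strictMono_id, Function.surjective_id⟩

theorem id_mem_sigmaTwo : id ∈ SigmaTwo :=
  ⟨sigmaHomeo_subset_sigmaAll id_mem_sigmaHomeo, fun r s => by
    simp only [id]; linarith [abs_nonneg ((r : ℝ) - s)]⟩

theorem mem_sigmaTwo_iff {f : I → I} :
    f ∈ SigmaTwo ↔ f 0 = 0 ∧ f 1 = 1 ∧ Monotone f ∧
      ∀ r s : I, |(f r : ℝ) - (f s : ℝ)| ≤ 2 * |(r : ℝ) - (s : ℝ)| := by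
  refine ⟨fun hf => ⟨map_zero_of_mem_sigmaAll hf.1, map_one_of_mem_sigmaAll hf.1, hf.1.2.1, hf.2⟩,
    fun ⟨h0, h1, hm, hl⟩ => ?_⟩
  have hc : Continuous f := (LipschitzWith.of_dist_le_mul (K := 2) fun r s => by
    simpa only [Subtype.dist_eq, Real.dist_eq, NNReal.coe_ofNat] using hl r s).continuous
  exact ⟨mem_sigmaAll_of_map_zero_of_map_one hc hm h0 h1, hl⟩

theorem isCompact_sigmaTwo : IsCompact SigmaTwo := by
  have hset : SigmaTwo = {f | f 0 = 0} ∩ {f | f 1 = 1} ∩ {f | Monotone f} ∩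
      ⋂ (r : I) (s : I), {f : I → I | |(f r : ℝ) - (f s : ℝ)| ≤ 2 * |(r : ℝ) - (s : ℝ)|} := by
    ext f
    simp only [mem_sigmaTwo_iff, mem_inter_iff, mem_iInter, mem_ofPred_eq, and_assoc]
  have hval (t : I) : Continuous fun f : I → I => (f t : ℝ) :=
    continuous_subtype_val.comp (continuous_apply t)
  refine IsClosed.isCompact ?_
  rw [hset]
  exact (((isClosed_eq (continuous_apply 0) continuous_const).inter
    (isClosed_eq (continuous_apply 1) continuous_const)).inter isClosed_monotone).inter
    (isClosed_iInter fun r => isClosed_iInter fun s =>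
      isClosed_le ((hval r).sub (hval s)).abs continuous_const)

section LineMap

def pointwiseLineMap (f g : I → I) (c : I) : I → I := fun t =>
  ⟨(1 - c) * f t + c * g t,
    convex_Icc (0 : ℝ) 1 (f t).2 (g t).2 (sub_nonneg.2 (le_one c)) (nonneg c) (sub_add_cancel 1 _)⟩

theorem coe_pointwiseLineMap (f g : I → I) (c t : I) :
    (pointwiseLineMap f g c t : ℝ) = (1 - c) * f t + c * g t :=
  rfl

variable {f g : I → I}

theorem pointwiseLineMap_mem_sigmaAll (hf : f ∈ SigmaAll) (hg : g ∈ SigmaAll) (c : I) :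
    pointwiseLineMap f g c ∈ SigmaAll := by
  have hf' : Continuous fun t => (f t : ℝ) := continuous_subtype_val.comp hf.1
  have hg' : Continuous fun t => (g t : ℝ) := continuous_subtype_val.comp hg.1
  refine mem_sigmaAll_of_map_zero_of_map_one ((by fun_prop :
    Continuous fun t => (1 - (c : ℝ)) * f t + c * g t).subtype_mk _) (fun a b hab => ?_) ?_ ?_
  · change (1 - (c : ℝ)) * f a + c * g a ≤ (1 - c) * f b + c * g b
    exact add_le_add (mul_le_mul_of_nonneg_left (hf.2.1 hab) (sub_nonneg.2 (le_one c)))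
      (mul_le_mul_of_nonneg_left (hg.2.1 hab) (nonneg c))
  all_goals
    ext1
    simp [coe_pointwiseLineMap, map_zero_of_mem_sigmaAll, map_one_of_mem_sigmaAll, hf, hg]

theorem pointwiseLineMap_mem_sigmaHomeo (hf : f ∈ SigmaAll) (hg : g ∈ SigmaHomeo) {c : I}
    (hc : c ≠ 0) : pointwiseLineMap f g c ∈ SigmaHomeo := by
  obtain ⟨hcont, -, hsurj⟩ := pointwiseLineMap_mem_sigmaAll hf (sigmaHomeo_subset_sigmaAll hg) c
  refine ⟨hcont, fun a b hab => ?_, hsurj⟩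
  have hc' : (0 : ℝ) < c := lt_of_le_of_ne (nonneg c) fun h => hc (Subtype.ext h.symm)
  change (1 - (c : ℝ)) * f a + c * g a < (1 - c) * f b + c * g b
  exact add_lt_add_of_le_of_lt (mul_le_mul_of_nonneg_left (hf.2.1 hab.le) (sub_nonneg.2 (le_one c)))
    (mul_lt_mul_of_pos_left (hg.2.1 hab) hc')

theorem dist_pointwiseLineMap_le (f g : I → I) (c t : I) :
    dist (f t) (pointwiseLineMap f g c t) ≤ c := by
  rw [Subtype.dist_eq, Real.dist_eq, coe_pointwiseLineMap,
    show (f t : ℝ) - ((1 - c) * f t + c * g t) = c * (f t - g t) by ring, abs_mul,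
    abs_of_nonneg (nonneg c)]
  refine mul_le_of_le_one_right (nonneg c) (abs_sub_le_iff.2 ⟨?_, ?_⟩) <;>
    linarith [nonneg (f t), nonneg (g t), le_one (f t), le_one (g t)]

theorem tendstoUniformly_pointwiseLineMap (f g : I → I) :
    TendstoUniformly (pointwiseLineMap f g) f (𝓝 0) := by
  rw [Metric.tendstoUniformly_iff]
  intro ε hε
  filter_upwards [Metric.ball_mem_nhds (0 : I) hε] with c hc t
  refine (dist_pointwiseLineMap_le f g c t).trans_lt ?_
  simpa [Subtype.dist_eq, abs_of_nonneg (nonneg c)] using hc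

end LineMap

theorem Monotone.abs_sub_le_abs_add_sub {α : Type*} [LinearOrder α] {u v : α → ℝ}
    (hu : Monotone u) (hv : Monotone v) (a b : α) : |u a - u b| ≤ |u a + v a - (u b + v b)| := by
  rcases le_total a b with hab | hab
  · have := hu hab; have := hv hab
    rw [abs_of_nonpos (by linarith), abs_of_nonpos (by linarith)]
    linarith
  · have := hu hab; have := hv hab
    rw [abs_of_nonneg (by linarith), abs_of_nonneg (by linarith)]
    linarith

theorem exists_mem_sigmaTwo_comp_eq {f g : I → I} (hf : f ∈ SigmaAll) (hg : g ∈ SigmaAll)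
    (hfg : ∀ a b, |(f a : ℝ) - f b| ≤ 2 * |(g a : ℝ) - g b|) : ∃ τ ∈ SigmaTwo, f = τ ∘ g := by
  set h := Function.surjInv hg.2.2
  have hgh : ∀ a, g (h a) = a := Function.surjInv_eq hg.2.2
  have hfiber : ∀ a b, g a = g b → f a = f b := fun a b hab =>
    Subtype.ext (sub_eq_zero.1 (abs_nonpos_iff.1 (by simpa [hab] using hfg a b)))
  refine ⟨f ∘ h, mem_sigmaTwo_iff.2 ⟨?_, ?_, fun a b hab => ?_, fun r s => ?_⟩,
    funext fun t => hfiber _ _ (hgh (g t)).symm⟩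
  · rw [Function.comp_apply, hfiber (h 0) 0 (by rw [hgh, map_zero_of_mem_sigmaAll hg]),
      map_zero_of_mem_sigmaAll hf]
  · rw [Function.comp_apply, hfiber (h 1) 1 (by rw [hgh, map_one_of_mem_sigmaAll hg]),
      map_one_of_mem_sigmaAll hf]
  · rcases le_total (h a) (h b) with hh | hh
    · exact hf.2.1 hh
    · have hba : b ≤ a := by simpa only [hgh] using hg.2.1 hh
      rw [le_antisymm hab hba]
  · simpa only [Function.comp_apply, hgh] using hfg (h r) (h s)

theorem exists_sigmaTwo_factorization {f₁ f₂ : I → I} (h₁ : f₁ ∈ SigmaAll) (h₂ : f₂ ∈ SigmaAll) :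
    ∃ g : I → I, Function.Surjective g ∧
      ∃ τ₁ ∈ SigmaTwo, ∃ τ₂ ∈ SigmaTwo, f₁ = τ₁ ∘ g ∧ f₂ = τ₂ ∘ g := by
  set g := pointwiseLineMap f₁ f₂ ⟨1 / 2, by norm_num, by norm_num⟩
  have hg := pointwiseLineMap_mem_sigmaAll h₁ h₂ ⟨1 / 2, by norm_num, by norm_num⟩
  have htwice (a b : I) :
      2 * |(g a : ℝ) - g b| = |(f₁ a : ℝ) + f₂ a - ((f₁ b : ℝ) + f₂ b)| := by
    rw [← abs_two, ← abs_mul]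
    congr 1
    simp only [g, coe_pointwiseLineMap]
    ring
  have hm₁ : Monotone fun t => (f₁ t : ℝ) := fun _ _ hab => h₁.2.1 hab
  have hm₂ : Monotone fun t => (f₂ t : ℝ) := fun _ _ hab => h₂.2.1 hab
  obtain ⟨τ₁, hτ₁, e₁⟩ := exists_mem_sigmaTwo_comp_eq h₁ hg fun a b =>
    (hm₁.abs_sub_le_abs_add_sub hm₂ a b).trans_eq (htwice a b).symm
  obtain ⟨τ₂, hτ₂, e₂⟩ := exists_mem_sigmaTwo_comp_eq h₂ hg fun a b =>
    (hm₂.abs_sub_le_abs_add_sub hm₁ a b).trans_eq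
      (by rw [htwice, add_comm (f₁ a : ℝ), add_comm (f₁ b : ℝ)])
  exact ⟨g, hg.2.2, τ₁, hτ₁, τ₂, hτ₂, e₁, e₂⟩

theorem dC_comm (hδsymm : ∀ x y, δ x y = δ y x) (γ γ' : I → X) : dC δ γ γ' = dC δ γ' γ :=
  iSup_congr fun _ => hδsymm _ _

theorem dC_le_add (hδtri : ∀ x y z, δ x z ≤ δ x y + δ y z) (γ γ' γ'' : I → X) :
    dC δ γ γ'' ≤ dC δ γ γ' + dC δ γ' γ'' :=
  iSup_le fun t => (hδtri _ (γ' t) _).trans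
    (add_le_add (le_iSup (fun t => δ (γ t) (γ' t)) t) (le_iSup (fun t => δ (γ' t) (γ'' t)) t))

theorem dC_comp_of_surjective (γ γ' : I → X) {g : I → I} (hg : Function.Surjective g) :
    dC δ (γ ∘ g) (γ' ∘ g) = dC δ γ γ' :=
  hg.iSup_comp fun t => δ (γ t) (γ' t)

theorem dA_le_dC (γ γ' : I → X) {f₁ f₂ : I → I} (h₁ : f₁ ∈ SigmaAll) (h₂ : f₂ ∈ SigmaAll) :
    dA δ γ γ' ≤ dC δ (γ ∘ f₁) (γ' ∘ f₂) :=
  (iInf₂_le f₁ h₁).trans (iInf₂_le f₂ h₂)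

theorem dA_le_dC_comp (γ γ' : I → X) {f : I → I} (hf : f ∈ SigmaAll) :
    dA δ γ γ' ≤ dC δ γ (γ' ∘ f) :=
  dA_le_dC γ γ' (sigmaHomeo_subset_sigmaAll id_mem_sigmaHomeo) hf

/-- On a compact space every neighbourhood of the diagonal is an entourage, and near `(t, t)` this
set is a neighbourhood since `δ (γ s) (γ s') ≤ δ (γ s) (γ t) + δ (γ s') (γ t)`. -/
theorem setOf_lt_mem_uniformity_of_tendsto {α : Type*} [UniformSpace α] [CompactSpace α]
    (hδsymm : ∀ x y, δ x y = δ y x) (hδtri : ∀ x y z, δ x z ≤ δ x y + δ y z) {γ : α → X}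
    (hγ : ∀ t, Tendsto (fun s => δ (γ s) (γ t)) (𝓝 t) (𝓝 0)) {ε : ℝ≥0∞} (hε : 0 < ε) :
    {p : α × α | δ (γ p.1) (γ p.2) < ε} ∈ 𝓤 α := by
  rw [← nhdsSet_diagonal_eq_uniformity, mem_nhdsSet_iff_forall]
  rintro ⟨t, t'⟩ (rfl : t = t')
  have hsum : Tendsto (fun p : α × α => δ (γ p.1) (γ t) + δ (γ p.2) (γ t)) (𝓝 (t, t)) (𝓝 0) := by
    simpa using ((hγ t).comp (continuous_fst.tendsto (t, t))).add
      ((hγ t).comp (continuous_snd.tendsto (t, t)))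
  filter_upwards [hsum.eventually_lt_const hε] with p hp
  calc δ (γ p.1) (γ p.2) ≤ δ (γ p.1) (γ t) + δ (γ t) (γ p.2) := hδtri _ _ _
    _ < ε := by rwa [hδsymm (γ t)]

theorem tendsto_dC_comp_of_tendstoUniformly (hδsymm : ∀ x y, δ x y = δ y x)
    (hδtri : ∀ x y z, δ x z ≤ δ x y + δ y z) {γ : I → X}
    (hγ : ∀ t, Tendsto (fun s => δ (γ s) (γ t)) (𝓝 t) (𝓝 0)) {ι : Type*} {l : Filter ι}
    {F : ι → I → I} {f : I → I} (hF : TendstoUniformly F f l) :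
    Tendsto (fun i => dC δ (γ ∘ F i) (γ ∘ f)) l (𝓝 0) := by
  refine ENNReal.tendsto_nhds_zero.2 fun ε hε => ?_
  filter_upwards [hF _ (setOf_lt_mem_uniformity_of_tendsto hδsymm hδtri hγ hε)] with i hi
  exact iSup_le fun t => (hδsymm _ _).trans_le (hi t).le

theorem iInf_sigmaHomeo_le_dC_comp (γ γ' : I → X) {f₁ f₂ : I → I} (hf₁ : f₁ ∈ SigmaHomeo)
    (hf₂ : f₂ ∈ SigmaHomeo) : ⨅ f ∈ SigmaHomeo, dC δ γ (γ' ∘ f) ≤ dC δ (γ ∘ f₁) (γ' ∘ f₂) := by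
  let e : I ≃o I := hf₁.2.1.orderIsoOfSurjective f₁ hf₁.2.2
  have he : f₂ ∘ e.symm ∈ SigmaHomeo :=
    ⟨hf₂.1.comp e.symm.continuous, hf₂.2.1.comp e.symm.strictMono, hf₂.2.2.comp e.symm.surjective⟩
  refine (iInf₂_le _ he).trans_eq ?_
  rw [← dC_comp_of_surjective γ (γ' ∘ f₂ ∘ e.symm) hf₁.2.2]
  congr 1
  funext t
  simp [e]

theorem dA_eq_iInf_sigmaHomeo (hδsymm : ∀ x y, δ x y = δ y x)
    (hδtri : ∀ x y z, δ x z ≤ δ x y + δ y z) {γ γ' : I → X}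
    (hγ : ∀ t, Tendsto (fun s => δ (γ s) (γ t)) (𝓝 t) (𝓝 0))
    (hγ' : ∀ t, Tendsto (fun s => δ (γ' s) (γ' t)) (𝓝 t) (𝓝 0)) :
    dA δ γ γ' = ⨅ f ∈ SigmaHomeo, dC δ γ (γ' ∘ f) := by
  refine le_antisymm (le_iInf₂ fun f hf => dA_le_dC_comp γ γ' (sigmaHomeo_subset_sigmaAll hf))
    (le_iInf₂ fun f₁ h₁ => le_iInf₂ fun f₂ h₂ => ?_)
  set F₁ := pointwiseLineMap f₁ id
  set F₂ := pointwiseLineMap f₂ id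
  have hF₁ := (tendsto_dC_comp_of_tendstoUniformly hδsymm hδtri hγ
    (tendstoUniformly_pointwiseLineMap f₁ id)).mono_left (nhdsWithin_le_nhds (s := {0}ᶜ))
  have hF₂ := (tendsto_dC_comp_of_tendstoUniformly hδsymm hδtri hγ'
    (tendstoUniformly_pointwiseLineMap f₂ id)).mono_left (nhdsWithin_le_nhds (s := {0}ᶜ))
  have hbound : Tendsto (fun c => dC δ (γ ∘ F₁ c) (γ ∘ f₁) + dC δ (γ ∘ f₁) (γ' ∘ f₂) +
      dC δ (γ' ∘ F₂ c) (γ' ∘ f₂)) (𝓝[≠] 0) (𝓝 (dC δ (γ ∘ f₁) (γ' ∘ f₂))) := by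
    simpa using (hF₁.add_const _).add hF₂
  refine ge_of_tendsto hbound (eventually_nhdsWithin_of_forall fun c (hc : c ≠ 0) => ?_)
  calc ⨅ f ∈ SigmaHomeo, dC δ γ (γ' ∘ f)
      ≤ dC δ (γ ∘ F₁ c) (γ' ∘ F₂ c) := iInf_sigmaHomeo_le_dC_comp γ γ'
        (pointwiseLineMap_mem_sigmaHomeo h₁ id_mem_sigmaHomeo hc)
        (pointwiseLineMap_mem_sigmaHomeo h₂ id_mem_sigmaHomeo hc)
    _ ≤ dC δ (γ ∘ F₁ c) (γ ∘ f₁) + dC δ (γ ∘ f₁) (γ' ∘ f₂) + dC δ (γ' ∘ f₂) (γ' ∘ F₂ c) :=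
        (dC_le_add hδtri _ (γ' ∘ f₂) _).trans (add_le_add (dC_le_add hδtri _ _ _) le_rfl)
    _ = _ := by rw [dC_comm hδsymm (γ' ∘ f₂)]

theorem lowerSemicontinuous_dC_comp [TopologicalSpace X]
    (hδ : LowerSemicontinuous fun p : X × X => δ p.1 p.2) {γ γ' : I → X} (hγ : Continuous γ)
    (hγ' : Continuous γ') :
    LowerSemicontinuous fun p : (I → I) × (I → I) => dC δ (γ ∘ p.1) (γ' ∘ p.2) :=
  lowerSemicontinuous_iSup fun t => hδ.comp
    ((hγ.comp ((continuous_apply t).comp continuous_fst)).prodMk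
      (hγ'.comp ((continuous_apply t).comp continuous_snd)))

theorem exists_sigmaTwo_dC_comp_eq_dA [TopologicalSpace X]
    (hδ : LowerSemicontinuous fun p : X × X => δ p.1 p.2) {γ γ' : I → X} (hγ : Continuous γ)
    (hγ' : Continuous γ') :
    ∃ f₁ ∈ SigmaTwo, ∃ f₂ ∈ SigmaTwo, dC δ (γ ∘ f₁) (γ' ∘ f₂) = dA δ γ γ' := by
  obtain ⟨p, ⟨hp₁, hp₂⟩, hmin⟩ := LowerSemicontinuousOn.exists_isMinOn (s := SigmaTwo ×ˢ SigmaTwo)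
    ⟨(id, id), id_mem_sigmaTwo, id_mem_sigmaTwo⟩ (isCompact_sigmaTwo.prod isCompact_sigmaTwo)
    ((lowerSemicontinuous_dC_comp hδ hγ hγ').lowerSemicontinuousOn _)
  refine ⟨p.1, hp₁, p.2, hp₂, le_antisymm (le_iInf₂ fun f₁ h₁ => le_iInf₂ fun f₂ h₂ => ?_)
    (dA_le_dC γ γ' (sigmaTwo_subset_sigmaAll hp₁) (sigmaTwo_subset_sigmaAll hp₂))⟩
  obtain ⟨g, hg, τ₁, hτ₁, τ₂, hτ₂, rfl, rfl⟩ := exists_sigmaTwo_factorization h₁ h₂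
  rw [← Function.comp_assoc, ← Function.comp_assoc, dC_comp_of_surjective _ _ hg]
  exact hmin (mk_mem_prod hτ₁ hτ₂)

theorem dA_le_iInf_add_iInf (hδtri : ∀ x y z, δ x z ≤ δ x y + δ y z) (γ₁ γ₂ γ₃ : I → X) :
    dA δ γ₁ γ₃ ≤ (⨅ f ∈ SigmaHomeo, dC δ γ₁ (γ₂ ∘ f)) + ⨅ f ∈ SigmaHomeo, dC δ γ₂ (γ₃ ∘ f) := by
  refine ENNReal.le_iInf₂_add_iInf₂ fun f hf f' hf' => ?_
  have hcomp : f' ∘ f ∈ SigmaAll := sigmaHomeo_subset_sigmaAll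
    ⟨hf'.1.comp hf.1, hf'.2.1.comp hf.2.1, hf'.2.2.comp hf.2.2⟩
  calc dA δ γ₁ γ₃ ≤ dC δ γ₁ ((γ₃ ∘ f') ∘ f) := dA_le_dC_comp γ₁ γ₃ hcomp
    _ ≤ dC δ γ₁ (γ₂ ∘ f) + dC δ (γ₂ ∘ f) ((γ₃ ∘ f') ∘ f) := dC_le_add hδtri _ _ _
    _ = dC δ γ₁ (γ₂ ∘ f) + dC δ γ₂ (γ₃ ∘ f') := by rw [dC_comp_of_surjective _ _ hf.2.2]

end

theorem stmt10_general {X : Type*} [TopologicalSpace X]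
    (δ : X → X → ℝ≥0∞)
    (hδsymm : ∀ x y, δ x y = δ y x)
    (hδtri : ∀ x y z, δ x z ≤ δ x y + δ y z)
    (hδlsc : LowerSemicontinuous (fun p : X × X => δ p.1 p.2))
    (γ₁ γ₂ γ₃ : I → X)
    (h₁ : Continuous γ₁) (h₂ : Continuous γ₂)
    (hδ₁ : ∀ t : I, Tendsto (fun s => δ (γ₁ s) (γ₁ t)) (𝓝 t) (𝓝 0))
    (hδ₂ : ∀ t : I, Tendsto (fun s => δ (γ₂ s) (γ₂ t)) (𝓝 t) (𝓝 0))
    (hδ₃ : ∀ t : I, Tendsto (fun s => δ (γ₃ s) (γ₃ t)) (𝓝 t) (𝓝 0)) :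
    (dA δ γ₁ γ₂ = ⨅ f ∈ SigmaHomeo, dC δ γ₁ (γ₂ ∘ f)) ∧
    (∃ f₁ ∈ SigmaTwo, ∃ f₂ ∈ SigmaTwo, dC δ (γ₁ ∘ f₁) (γ₂ ∘ f₂) = dA δ γ₁ γ₂) ∧
    dA δ γ₁ γ₃ ≤ dA δ γ₁ γ₂ + dA δ γ₂ γ₃ := by
  have h₁₂ := dA_eq_iInf_sigmaHomeo hδsymm hδtri hδ₁ hδ₂
  refine ⟨h₁₂, exists_sigmaTwo_dC_comp_eq_dA hδlsc h₁ h₂, ?_⟩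
  rw [h₁₂, dA_eq_iInf_sigmaHomeo hδsymm hδtri hδ₂ hδ₃]
  exact dA_le_iInf_add_iInf hδtri γ₁ γ₂ γ₃

theorem stmt10 {X : Type*} [TopologicalSpace X] [T2Space X]
    (δ : X → X → ℝ≥0∞)
    (hδ0 : ∀ x, δ x x = 0)
    (hδsymm : ∀ x y, δ x y = δ y x)
    (hδtri : ∀ x y z, δ x z ≤ δ x y + δ y z)
    (hδlsc : LowerSemicontinuous (fun p : X × X => δ p.1 p.2))
    (γ₁ γ₂ γ₃ : I → X)
    (h₁ : Continuous γ₁) (h₂ : Continuous γ₂) (h₃ : Continuous γ₃)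
    (hδ₁ : ∀ t : I, Tendsto (fun s => δ (γ₁ s) (γ₁ t)) (𝓝 t) (𝓝 0))
    (hδ₂ : ∀ t : I, Tendsto (fun s => δ (γ₂ s) (γ₂ t)) (𝓝 t) (𝓝 0))
    (hδ₃ : ∀ t : I, Tendsto (fun s => δ (γ₃ s) (γ₃ t)) (𝓝 t) (𝓝 0)) :
    (dA δ γ₁ γ₂ = ⨅ f ∈ SigmaHomeo, dC δ γ₁ (γ₂ ∘ f)) ∧
    (∃ f₁ ∈ SigmaTwo, ∃ f₂ ∈ SigmaTwo, dC δ (γ₁ ∘ f₁) (γ₂ ∘ f₂) = dA δ γ₁ γ₂) ∧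
    dA δ γ₁ γ₃ ≤ dA δ γ₁ γ₂ + dA δ γ₂ γ₃ :=
  stmt10_general δ hδsymm hδtri hδlsc γ₁ γ₂ γ₃ h₁ h₂ hδ₁ hδ₂ hδ₃
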